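/- arXiv:2304.14074 — 2 statements merged into one kernel-verified Lean document; each statement's English description precedes it below -/
import Mathlib

section
/- (Stability of PA-II.) Let u⁰ ∈ ℝ^m and let (U_n^k)_{n,k≥0} be a family of vectors in ℝ^m satisfying U_0^k = u⁰ for all k and the Parareal recurrence U_{n+1}^{k+1} = P_2·U_n^{k+1} + (P_{J_2} − P_2)·U_n^k for all n, k ≥ 0. Then for every n and k, ‖U_{n+1}^{k+1}‖ ≤ ‖u⁰‖ + (n+1)·max_{0≤j≤n} ‖U_j^k‖. -/
/-- The m×m discrete Dirichlet Laplacian with mesh size `h`. -/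
noncomputable def Dh (m : ℕ) (h : ℝ) : Matrix (Fin m) (Fin m) ℝ :=
  Matrix.of fun i j =>
    if (i : ℕ) = (j : ℕ) then 1 / h ^ 2 * (-2)
    else if (i : ℕ) + 1 = (j : ℕ) ∨ (j : ℕ) + 1 = (i : ℕ) then 1 / h ^ 2 * 1
    else 0

/-- `Pmat m h ΔT ε i = (I − iΔT·D_h + ε²ΔT·D_h²)⁻¹ (I − iΔT·D_h)`. -/
noncomputable def Pmat (m : ℕ) (h ΔT ε : ℝ) (i : ℕ) : Matrix (Fin m) (Fin m) ℝ :=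
  ((1 : Matrix (Fin m) (Fin m) ℝ) - ((i : ℝ) * ΔT) • Dh m h
      + (ε ^ 2 * ΔT) • Dh m h ^ 2)⁻¹
    * ((1 : Matrix (Fin m) (Fin m) ℝ) - ((i : ℝ) * ΔT) • Dh m h)

/-- `PJmat m h ΔT ε J i = [(I − (iΔT/J)·D_h + ε²(ΔT/J)·D_h²)⁻¹ (I − (iΔT/J)·D_h)]^J`. -/
noncomputable def PJmat (m : ℕ) (h ΔT ε : ℝ) (J i : ℕ) : Matrix (Fin m) (Fin m) ℝ :=
  (((1 : Matrix (Fin m) (Fin m) ℝ) - ((i : ℝ) * ΔT / (J : ℝ)) • Dh m h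
      + (ε ^ 2 * (ΔT / (J : ℝ))) • Dh m h ^ 2)⁻¹
    * ((1 : Matrix (Fin m) (Fin m) ℝ) - ((i : ℝ) * ΔT / (J : ℝ)) • Dh m h)) ^ J

/-- The action of a matrix on `EuclideanSpace ℝ (Fin m)` (i.e. `ℝ^m` with the
Euclidean norm), given by matrix-vector multiplication. -/
noncomputable def act {m : ℕ} (A : Matrix (Fin m) (Fin m) ℝ)
    (U : EuclideanSpace ℝ (Fin m)) : EuclideanSpace ℝ (Fin m) :=
  Matrix.toEuclideanCLM (𝕜 := ℝ) A U

/-- The operator (spectral) norm of a matrix, induced by the Euclidean norm. -/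
noncomputable def opNorm {m : ℕ} (A : Matrix (Fin m) (Fin m) ℝ) : ℝ :=
  ‖Matrix.toEuclideanCLM (𝕜 := ℝ) A‖

/-!
`D_h` is symmetric with spectrum in `(-∞, 0]`: its off-diagonal entries are nonnegative and its
row sums nonpositive, so every Gershgorin disc lies in the left half-line. Each `P_i`, and each
factor of `P_{J_i}`, is `R(D_h)` for the rational function `R(t) = (1 - c t) / (1 - c t + e t²)`
with `c, e ≥ 0`, and `R` maps `(-∞, 0]` into `(0, 1]`. By the continuous functional calculus,
`‖P_2‖ ≤ 1` and `‖P_{J_2} - P_2‖ ≤ 1`, since the difference of two numbers in `(0, 1]` lies in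
`[-1, 1]`. The recurrence then gives `‖U_{n+1}^{k+1}‖ ≤ ‖U_n^{k+1}‖ + ‖U_n^k‖`, and summing over `n`
bounds `‖U_{n+1}^{k+1}‖` by `‖u⁰‖ + ∑_{j ≤ n} ‖U_j^k‖`.
-/

open Matrix Finset
open scoped Matrix.Norms.L2Operator

theorem Matrix.nonpos_of_mem_spectrum_of_sum_row_nonpos {n : Type*} [Fintype n] [DecidableEq n]
    {A : Matrix n n ℝ} (hoff : ∀ i j, i ≠ j → 0 ≤ A i j) (hrow : ∀ i, ∑ j, A i j ≤ 0)
    {μ : ℝ} (hμ : μ ∈ spectrum ℝ A) : μ ≤ 0 := by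
  rw [← spectrum_toLin', ← Module.End.hasEigenvalue_iff_mem_spectrum] at hμ
  obtain ⟨k, hk⟩ := eigenvalue_mem_ball hμ
  have hoffk : ∑ j ∈ univ.erase k, ‖A k j‖ = ∑ j ∈ univ.erase k, A k j :=
    sum_congr rfl fun j hj => Real.norm_of_nonneg (hoff k j (ne_of_mem_erase hj).symm)
  rw [Metric.mem_closedBall, Real.dist_eq, hoffk] at hk
  linarith [(abs_le.mp hk).2, add_sum_erase univ (A k) (mem_univ k), hrow k]

theorem sum_boole_le_one {ι : Type*} [Fintype ι] (p : ι → Prop) [DecidablePred p]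
    (hp : ∀ i j, p i → p j → i = j) : ∑ j, (if p j then (1 : ℝ) else 0) ≤ 1 := by
  rw [sum_boole, Nat.cast_le_one]
  exact card_le_one.mpr fun i hi j hj => hp i j (mem_filter.mp hi).2 (mem_filter.mp hj).2

section Laplacian

variable {m : ℕ} {h : ℝ}

theorem Dh_isSelfAdjoint : IsSelfAdjoint (Dh m h) := by
  ext i j
  simp only [Dh, star_apply, of_apply, star_trivial]
  split_ifs <;> first | rfl | omega

theorem Dh_nonneg_of_ne {i j : Fin m} (hij : i ≠ j) : 0 ≤ Dh m h i j := by
  have : (i : ℕ) ≠ j := Fin.val_ne_of_ne hij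
  simp only [Dh, of_apply, this, if_false]
  split_ifs <;> positivity

theorem Dh_apply_le (i j : Fin m) :
    Dh m h i j ≤ 1 / h ^ 2 * ((if (j : ℕ) = i + 1 then 1 else 0)
      + (if (j : ℕ) + 1 = i then 1 else 0) - 2 * (if j = i then 1 else 0)) := by
  have hc : 0 ≤ 1 / h ^ 2 := by positivity
  simp only [Dh, of_apply, Fin.ext_iff]
  split_ifs <;> first | omega | nlinarith

theorem Dh_sum_row_nonpos (i : Fin m) : ∑ j, Dh m h i j ≤ 0 := by
  have hc : 0 ≤ 1 / h ^ 2 := by positivity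
  refine (sum_le_sum fun j _ => Dh_apply_le i j).trans ?_
  rw [← mul_sum, sum_sub_distrib, sum_add_distrib, ← mul_sum, sum_ite_eq']
  simp only [mem_univ, if_true]
  have h₁ := sum_boole_le_one (fun j : Fin m => (j : ℕ) = i + 1) fun a b ha hb => by omega
  have h₂ := sum_boole_le_one (fun j : Fin m => (j : ℕ) + 1 = i) fun a b ha hb => by omega
  nlinarith

theorem nonpos_of_mem_spectrum_Dh {t : ℝ} (ht : t ∈ spectrum ℝ (Dh m h)) : t ≤ 0 :=
  nonpos_of_mem_spectrum_of_sum_row_nonpos (fun _ _ => Dh_nonneg_of_ne) Dh_sum_row_nonpos ht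

end Laplacian

noncomputable def stabilityFun (c e t : ℝ) : ℝ := (1 - c * t + e * t ^ 2)⁻¹ * (1 - c * t)

theorem stabilityFun_mem_Ioc {c e t : ℝ} (hc : 0 ≤ c) (he : 0 ≤ e) (ht : t ≤ 0) :
    stabilityFun c e t ∈ Set.Ioc 0 1 := by
  have hnum : 0 < 1 - c * t := by nlinarith
  have hle : 1 - c * t ≤ 1 - c * t + e * t ^ 2 := by nlinarith
  exact ⟨by unfold stabilityFun; positivity, inv_mul_le_one_of_le₀ hle (by positivity)⟩

theorem Matrix.inv_mul_eq_cfc_stabilityFun {n : Type*} [Fintype n] [DecidableEq n]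
    {A : Matrix n n ℝ} (hA : IsSelfAdjoint A) (hσ : ∀ t ∈ spectrum ℝ A, t ≤ 0)
    {c e : ℝ} (hc : 0 ≤ c) (he : 0 ≤ e) :
    (1 - c • A + e • A ^ 2)⁻¹ * (1 - c • A) = cfc (stabilityFun c e) A := by
  have hcont (f : ℝ → ℝ) : ContinuousOn f (spectrum ℝ A) := A.finite_real_spectrum.continuousOn f
  have hden : ∀ t ∈ spectrum ℝ A, 1 - c * t + e * t ^ 2 ≠ 0 := fun t ht => by
    nlinarith [hσ t ht, mul_nonneg hc (neg_nonneg.mpr (hσ t ht)), mul_nonneg he (sq_nonneg t)]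
  have hB : cfc (fun t => 1 - c * t + e * t ^ 2) A = 1 - c • A + e • A ^ 2 := by
    rw [cfc_add .., cfc_sub .., cfc_const_one .., cfc_const_mul .., cfc_const_mul ..,
      cfc_pow_id .., cfc_id' ..]
  have hN : cfc (fun t => 1 - c * t) A = 1 - c • A := by
    rw [cfc_sub .., cfc_const_one .., cfc_const_mul .., cfc_id' ..]
  have hfactor : (1 - c • A + e • A ^ 2) * cfc (stabilityFun c e) A = 1 - c • A := by
    rw [← hB, ← hN, ← cfc_mul _ _ A (hcont _) (hcont _)]
    exact cfc_congr fun t ht => mul_inv_cancel_left₀ (hden t ht) _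
  have hunit : IsUnit (1 - c • A + e • A ^ 2) := by
    rw [← hB]
    exact (isUnit_cfc_iff _ A (hcont _)).mpr hden
  calc (1 - c • A + e • A ^ 2)⁻¹ * (1 - c • A)
      = (1 - c • A + e • A ^ 2)⁻¹ * ((1 - c • A + e • A ^ 2) * cfc (stabilityFun c e) A) := by
        rw [hfactor]
    _ = cfc (stabilityFun c e) A :=
        nonsing_inv_mul_cancel_left _ _ ((isUnit_iff_isUnit_det _).mp hunit)

theorem norm_act_cfc_le {m : ℕ} {A : Matrix (Fin m) (Fin m) ℝ} {f : ℝ → ℝ}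
    (hf : ∀ t ∈ spectrum ℝ A, |f t| ≤ 1) (x : EuclideanSpace ℝ (Fin m)) :
    ‖act (cfc f A) x‖ ≤ ‖x‖ :=
  calc ‖act (cfc f A) x‖ ≤ ‖cfc f A‖ * ‖x‖ := (toEuclideanCLM (𝕜 := ℝ) (cfc f A)).le_opNorm x
    _ ≤ 1 * ‖x‖ := by gcongr; exact norm_cfc_le zero_le_one hf
    _ = ‖x‖ := one_mul _

section Propagators

variable {m : ℕ} {h ΔT ε : ℝ}

theorem Pmat_eq_cfc (hΔT : 0 ≤ ΔT) (i : ℕ) :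
    Pmat m h ΔT ε i = cfc (stabilityFun (i * ΔT) (ε ^ 2 * ΔT)) (Dh m h) :=
  inv_mul_eq_cfc_stabilityFun Dh_isSelfAdjoint (fun _ => nonpos_of_mem_spectrum_Dh)
    (by positivity) (by positivity)

theorem PJmat_eq_cfc (hΔT : 0 ≤ ΔT) (J i : ℕ) :
    PJmat m h ΔT ε J i =
      cfc (fun t => stabilityFun (i * ΔT / J) (ε ^ 2 * (ΔT / J)) t ^ J) (Dh m h) := by
  rw [PJmat, inv_mul_eq_cfc_stabilityFun Dh_isSelfAdjoint (fun _ => nonpos_of_mem_spectrum_Dh)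
    (by positivity) (by positivity), cfc_pow _ _ _ ((Dh m h).finite_real_spectrum.continuousOn _)
    Dh_isSelfAdjoint]

theorem norm_act_Pmat_le (hΔT : 0 ≤ ΔT) (i : ℕ) (x : EuclideanSpace ℝ (Fin m)) :
    ‖act (Pmat m h ΔT ε i) x‖ ≤ ‖x‖ := by
  rw [Pmat_eq_cfc hΔT]
  refine norm_act_cfc_le (fun t ht => ?_) x
  have hR := stabilityFun_mem_Ioc (c := i * ΔT) (e := ε ^ 2 * ΔT) (by positivity)
    (by positivity) (nonpos_of_mem_spectrum_Dh ht)
  exact abs_le.mpr ⟨by linarith [hR.1], hR.2⟩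

theorem norm_act_PJmat_sub_Pmat_le (hΔT : 0 ≤ ΔT) (J i i' : ℕ) (x : EuclideanSpace ℝ (Fin m)) :
    ‖act (PJmat m h ΔT ε J i - Pmat m h ΔT ε i') x‖ ≤ ‖x‖ := by
  have hfin := (Dh m h).finite_real_spectrum
  rw [PJmat_eq_cfc hΔT, Pmat_eq_cfc hΔT,
    ← cfc_sub (hf := hfin.continuousOn _) (hg := hfin.continuousOn _)]
  refine norm_act_cfc_le (fun t ht => ?_) x
  have hR := stabilityFun_mem_Ioc (c := i' * ΔT) (e := ε ^ 2 * ΔT) (by positivity)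
    (by positivity) (nonpos_of_mem_spectrum_Dh ht)
  have hRJ := stabilityFun_mem_Ioc (c := i * ΔT / J) (e := ε ^ 2 * (ΔT / J)) (by positivity)
    (by positivity) (nonpos_of_mem_spectrum_Dh ht)
  have hRJpow : stabilityFun (i * ΔT / J) (ε ^ 2 * (ΔT / J)) t ^ J ∈ Set.Ioc 0 1 :=
    ⟨pow_pos hRJ.1 J, pow_le_one₀ hRJ.1.le hRJ.2⟩
  exact abs_le.mpr ⟨by linarith [hR.2, hRJpow.1], by linarith [hR.1, hRJpow.2]⟩

end Propagators

theorem le_add_sum_range_of_succ_le {x y : ℕ → ℝ} (hxy : ∀ n, x (n + 1) ≤ x n + y n) (n : ℕ) :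
    x n ≤ x 0 + ∑ j ∈ range n, y j := by
  induction n with
  | zero => simp
  | succ n ih => rw [sum_range_succ]; linarith [hxy n]

theorem sum_range_le_mul_sup' (y : ℕ → ℝ) (n : ℕ) :
    ∑ j ∈ range (n + 1), y j ≤ ((n : ℝ) + 1) * (range (n + 1)).sup' nonempty_range_add_one y := by
  have := sum_le_card_nsmul (range (n + 1)) y ((range (n + 1)).sup' nonempty_range_add_one y)
    fun j hj => le_sup' y hj
  rwa [card_range, nsmul_eq_mul, Nat.cast_succ] at this

theorem stmt11_general (h ΔT ε : ℝ) (hΔT : 0 < ΔT)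
    (m : ℕ) (J : ℕ)
    (u0 : EuclideanSpace ℝ (Fin m)) (U : ℕ → ℕ → EuclideanSpace ℝ (Fin m))
    (h0 : ∀ k, U 0 k = u0)
    (hrec : ∀ n k, U (n + 1) (k + 1) =
      act (Pmat m h ΔT ε 2) (U n (k + 1))
        + act (PJmat m h ΔT ε J 2 - Pmat m h ΔT ε 2) (U n k)) :
    ∀ n k, ‖U (n + 1) (k + 1)‖ ≤ ‖u0‖ +
      ((n : ℝ) + 1) *
        ((Finset.range (n + 1)).sup' (Finset.nonempty_range_iff.mpr n.succ_ne_zero)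
          fun j => ‖U j k‖) := by
  have hstep (n k : ℕ) : ‖U (n + 1) (k + 1)‖ ≤ ‖U n (k + 1)‖ + ‖U n k‖ := by
    rw [hrec]
    exact (norm_add_le _ _).trans
      (add_le_add (norm_act_Pmat_le hΔT.le _ _) (norm_act_PJmat_sub_Pmat_le hΔT.le _ _ _ _))
  intro n k
  calc ‖U (n + 1) (k + 1)‖ ≤ ‖U 0 (k + 1)‖ + ∑ j ∈ range (n + 1), ‖U j k‖ :=
        le_add_sum_range_of_succ_le (x := fun n => ‖U n (k + 1)‖) (fun n => hstep n k) (n + 1)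
    _ ≤ _ := by rw [h0]; exact add_le_add le_rfl (sum_range_le_mul_sup' _ n)

theorem stmt11 (h ΔT ε : ℝ) (hh : 0 < h) (hΔT : 0 < ΔT) (hε : 0 < ε)
    (m : ℕ) (hm : 1 ≤ m) (J : ℕ) (hJ : 2 ≤ J)
    (u0 : EuclideanSpace ℝ (Fin m)) (U : ℕ → ℕ → EuclideanSpace ℝ (Fin m))
    (h0 : ∀ k, U 0 k = u0)
    (hrec : ∀ n k, U (n + 1) (k + 1) =
      act (Pmat m h ΔT ε 2) (U n (k + 1))
        + act (PJmat m h ΔT ε J 2 - Pmat m h ΔT ε 2) (U n k)) :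
    ∀ n k, ‖U (n + 1) (k + 1)‖ ≤ ‖u0‖ +
      ((n : ℝ) + 1) *
        ((Finset.range (n + 1)).sup' (Finset.nonempty_range_iff.mpr n.succ_ne_zero)
          fun j => ‖U j k‖) :=
  stmt11_general h ΔT ε hΔT m J u0 U h0 hrec
end

section
/- (Convergence of PA-II.) Let N ≥ 1 be an integer, u⁰ ∈ ℝ^m, and define the fine solution by U(T_0) = u⁰ and U(T_{n+1}) = P_{J_2}·U(T_n) for 0 ≤ n ≤ N−1. Let (U_n^k)_{0≤n≤N, k≥0} satisfy U_0^k = u⁰ for all k and U_{n+1}^{k+1} = P_2·U_n^{k+1} + (P_{J_2} − P_2)·U_n^k for 0 ≤ n ≤ N−1 and k ≥ 0. Set E_n^k = U(T_n) − U_n^k, α = ‖P_{J_2} − P_2‖ and β = ‖P_2‖ (so β < 1). Then for every k ≥ 0, max_{1≤j≤N} ‖E_j^{k+1}‖ ≤ α^{k+1} · min{ ((1 − β^{N−1})/(1 − β))^{k+1} , C(N−1, k+1) } · max_{1≤j≤N} ‖E_j^0‖, where C(·,·) denotes the binomial coefficient. -/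
section

open Finset Matrix

theorem sum_mul_second_diff_eq (z : ℕ → ℝ) (hz : z 0 = 0) (n : ℕ) :
    ∑ i ∈ range n, z (i + 1) * (z i - 2 * z (i + 1) + z (i + 2)) =
      z n * z (n + 1) - z n ^ 2 - ∑ i ∈ range n, (z (i + 1) - z i) ^ 2 := by
  induction n with
  | zero => simp [hz]
  | succ n ih => rw [sum_range_succ, sum_range_succ, ih]; ring

/-- The grid vector `x` at the nodes `1, …, m`, padded with the homogeneous Dirichlet values at
node `0` and at the nodes from `m + 1` on. -/
def dirichletExtend {m : ℕ} (x : Fin m → ℝ) : ℕ → ℝ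
  | 0 => 0
  | n + 1 => if hn : n < m then x ⟨n, hn⟩ else 0

lemma dirichletExtend_succ {m : ℕ} (x : Fin m → ℝ) (j : Fin m) :
    dirichletExtend x (j + 1) = x j := dif_pos j.isLt

lemma dirichletExtend_succ_of_le {m : ℕ} (x : Fin m → ℝ) {n : ℕ} (hn : m ≤ n) :
    dirichletExtend x (n + 1) = 0 := dif_neg (by omega)

lemma Dh_mulVec_apply (m : ℕ) (h : ℝ) (x : Fin m → ℝ) (i : Fin m) :
    (Dh m h *ᵥ x) i = 1 / h ^ 2 * (dirichletExtend x i - 2 * dirichletExtend x (i + 1)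
      + dirichletExtend x (i + 2)) := by
  set z := dirichletExtend x
  have hx : ∀ j : Fin m, x j = z (j + 1) := fun j => (dirichletExtend_succ x j).symm
  have hsplit : ∀ j : Fin m, Dh m h i j * x j = 1 / h ^ 2 *
      ((if (j : ℕ) = i + 1 then z (j + 1) else 0) - 2 * (if (j : ℕ) = i then z (j + 1) else 0)
        + (if (j : ℕ) + 1 = i then z (j + 1) else 0)) := by
    intro j
    simp only [Dh, of_apply, hx]
    split_ifs <;> first | omega | ring
  simp only [mulVec, dotProduct, hsplit, ← mul_sum, sum_add_distrib, sum_sub_distrib]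
  rw [Fin.sum_univ_eq_sum_range (fun j => if j = i + 1 then z (j + 1) else 0),
    Fin.sum_univ_eq_sum_range (fun j => if j = i then z (j + 1) else 0),
    Fin.sum_univ_eq_sum_range (fun j => if j + 1 = i then z (j + 1) else 0)]
  obtain ⟨i, hi⟩ := i
  have s1 : ∑ j ∈ range m, (if j = i + 1 then z (j + 1) else 0) = z (i + 2) := by
    rw [sum_ite_eq']
    split_ifs with him
    · rfl
    · exact (dirichletExtend_succ_of_le x (by simpa using him)).symm
  have s2 : ∑ j ∈ range m, (if j = i then z (j + 1) else 0) = z (i + 1) := by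
    simp [sum_ite_eq', hi]
  have s3 : ∑ j ∈ range m, (if j + 1 = i then z (j + 1) else 0) = z i := by
    rcases i with _ | i
    · simp [z, dirichletExtend]
    · simp [sum_ite_eq', show i < m by omega]
  rw [s1, s2, s3]
  ring

lemma dotProduct_Dh_mulVec (m : ℕ) (h : ℝ) (x : Fin m → ℝ) :
    x ⬝ᵥ (Dh m h *ᵥ x) = -(1 / h ^ 2) *
      ∑ i ∈ range (m + 1), (dirichletExtend x (i + 1) - dirichletExtend x i) ^ 2 := by
  set z := dirichletExtend x
  have hx : ∀ j : Fin m, x j = z (j + 1) := fun j => (dirichletExtend_succ x j).symm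
  have hlast : z (m + 1) = 0 := dirichletExtend_succ_of_le x le_rfl
  have hsum := sum_mul_second_diff_eq z rfl m
  simp only [dotProduct, Dh_mulVec_apply, hx]
  rw [Fin.sum_univ_eq_sum_range (fun i => z (i + 1) * (1 / h ^ 2 * (z i - 2 * z (i + 1)
    + z (i + 2)))), sum_range_succ, hlast]
  rw [hlast] at hsum
  simp_rw [mul_left_comm _ (1 / h ^ 2)]
  rw [← mul_sum, hsum]
  ring

lemma isHermitian_Dh (m : ℕ) (h : ℝ) : (Dh m h).IsHermitian := by
  ext i j
  simp only [conjTranspose_apply, Dh, of_apply, star_trivial]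
  split_ifs <;> first | rfl | omega

lemma posDef_neg_Dh (m : ℕ) {h : ℝ} (hh : h ≠ 0) : (-Dh m h).PosDef := by
  refine .of_dotProduct_mulVec_pos (isHermitian_Dh m h).neg fun x hx => ?_
  set z := dirichletExtend x
  have hsq : 0 ≤ ∑ i ∈ range (m + 1), (z (i + 1) - z i) ^ 2 := sum_nonneg fun _ _ => sq_nonneg _
  suffices hne : ∑ i ∈ range (m + 1), (z (i + 1) - z i) ^ 2 ≠ 0 by
    rw [star_trivial, neg_mulVec, dotProduct_neg, dotProduct_Dh_mulVec]
    have : 0 < 1 / h ^ 2 := by positivity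
    nlinarith [hsq.lt_of_ne hne.symm]
  intro h0
  have hdiff := (sum_eq_zero_iff_of_nonneg fun _ _ => sq_nonneg _).mp h0
  have hz : ∀ i ≤ m, z i = 0 := by
    intro i hi
    induction i with
    | zero => rfl
    | succ i ih =>
      have := hdiff i (mem_range.mpr (by omega))
      rw [← ih (by omega)]
      linarith [pow_eq_zero_iff (n := 2) two_ne_zero |>.mp this]
  exact hx (funext fun j => by simpa [z, dirichletExtend_succ] using hz (j + 1) j.isLt)

open scoped Matrix.Norms.L2Operator in
theorem ContinuousLinearMap.opNorm_le_of_orthonormalBasis_eigen {ι 𝕜 E : Type*} [Fintype ι]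
    [DecidableEq ι] [RCLike 𝕜] [NormedAddCommGroup E] [InnerProductSpace 𝕜 E] (T : E →L[𝕜] E)
    (b : OrthonormalBasis ι 𝕜 E) (μ : ι → 𝕜) (hT : ∀ i, T (b i) = μ i • b i) : ‖T‖ ≤ ‖μ‖ := by
  set Λ := toEuclideanCLM (n := ι) (𝕜 := 𝕜) (diagonal μ)
  refine T.opNorm_le_bound (norm_nonneg _) fun x => ?_
  have hx : b.repr (T x) = Λ (b.repr x) := by
    conv_lhs => rw [← b.sum_repr x]
    ext i
    simp [Λ, hT, b.repr_self, mulVec_diagonal, Pi.single_apply, mul_comm]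
  rw [← b.repr.norm_map, hx, ← b.repr.norm_map x, ← l2_opNorm_diagonal]
  exact Λ.le_opNorm _

theorem Matrix.inv_mul_mulVec_eq_smul {n 𝕜 : Type*} [Fintype n] [DecidableEq n] [Field 𝕜]
    {A B : Matrix n n 𝕜} (hA : IsUnit A) {v : n → 𝕜} {a b : 𝕜} (hAv : A *ᵥ v = a • v)
    (hBv : B *ᵥ v = b • v) (ha : a ≠ 0) : (A⁻¹ * B) *ᵥ v = (b / a) • v := by
  have hinv : A⁻¹ *ᵥ v = a⁻¹ • v := by
    have := congrArg (A⁻¹ *ᵥ ·) hAv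
    simp only [mulVec_mulVec, nonsing_inv_mul _ ((isUnit_iff_isUnit_det A).mp hA), one_mulVec,
      mulVec_smul] at this
    rw [eq_inv_smul_iff₀ ha]
    exact this.symm
  rw [← mulVec_mulVec, hBv, mulVec_smul, hinv, smul_smul, div_eq_mul_inv]

theorem Matrix.quadratic_mulVec_of_mulVec_eq_smul {n 𝕜 : Type*} [Fintype n] [DecidableEq n]
    [Field 𝕜] {D : Matrix n n 𝕜} {v : n → 𝕜} {k : 𝕜} (hv : D *ᵥ v = k • v) (a c : 𝕜) :
    (1 - a • D + c • D ^ 2) *ᵥ v = (1 - a * k + c * k ^ 2) • v := by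
  simp only [add_mulVec, sub_mulVec, one_mulVec, smul_mulVec, pow_two, ← mulVec_mulVec, hv,
    mulVec_smul]
  module

theorem norm_toEuclideanCLM_inv_mul_lt_one {n : Type*} [Fintype n] [DecidableEq n]
    {D : Matrix n n ℝ} (hD : (-D).PosDef) {a c : ℝ} (ha : 0 ≤ a) (hc : 0 < c) :
    ‖toEuclideanCLM (n := n) (𝕜 := ℝ) ((1 - a • D + c • D ^ 2)⁻¹ * (1 - a • D))‖ < 1 := by
  set b := hD.isHermitian.eigenvectorBasis
  set κ := hD.isHermitian.eigenvalues
  have hκ : ∀ j, 0 < κ j := hD.eigenvalues_pos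
  have hDv : ∀ j, D *ᵥ b j = (-κ j) • b j := fun j => by
    rw [neg_smul, ← hD.isHermitian.mulVec_eigenvectorBasis, neg_mulVec, neg_neg]
  have hA : (1 - a • D + c • D ^ 2).PosDef := by
    rw [show 1 - a • D + c • D ^ 2 = 1 + a • (-D) + c • (-D) ^ 2 by rw [neg_sq, smul_neg]; abel]
    exact (PosDef.one.add_posSemidef (hD.posSemidef.smul ha)).add_posSemidef
      ((hD.posSemidef.pow 2).smul hc.le)
  set μ : n → ℝ := fun j => (1 + a * κ j) / (1 + a * κ j + c * κ j ^ 2)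
  have hP : ∀ j, toEuclideanCLM (n := n) (𝕜 := ℝ)
      ((1 - a • D + c • D ^ 2)⁻¹ * (1 - a • D)) (b j) = μ j • b j := by
    intro j
    have hB : (1 - a • D) *ᵥ (b j).ofLp = (1 + a * κ j) • (b j).ofLp := by
      simp only [sub_mulVec, one_mulVec, smul_mulVec, hDv j, smul_smul]
      module
    have hAv := quadratic_mulVec_of_mulVec_eq_smul (hDv j) a c
    rw [show 1 - a * -κ j + c * (-κ j) ^ 2 = 1 + a * κ j + c * κ j ^ 2 by ring] at hAv
    apply WithLp.ofLp_injective
    rw [ofLp_toEuclideanCLM, WithLp.ofLp_smul]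
    exact inv_mul_mulVec_eq_smul hA.isUnit hAv hB (by have := hκ j; positivity)
  calc _ ≤ ‖μ‖ := ContinuousLinearMap.opNorm_le_of_orthonormalBasis_eigen _ b μ hP
    _ < 1 := by
      refine (pi_norm_lt_iff one_pos).mpr fun j => ?_
      have hκj := hκ j
      have hg : 0 < c * κ j ^ 2 := by positivity
      rw [Real.norm_eq_abs, abs_lt]
      constructor
      · linarith [show 0 < μ j by positivity]
      · exact (div_lt_one (by positivity)).mpr (by linarith)

theorem opNorm_Pmat_lt_one {m : ℕ} {h ΔT ε : ℝ} (hh : h ≠ 0) (hΔT : 0 < ΔT) (hε : ε ≠ 0)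
    (i : ℕ) : opNorm (Pmat m h ΔT ε i) < 1 :=
  norm_toEuclideanCLM_inv_mul_lt_one (posDef_neg_Dh m hh) (by positivity) (by positivity)

section Parareal

variable {e : ℕ → ℕ → ℝ} {α β : ℝ} {N : ℕ}

theorem parareal_le_geom_sum (hα : 0 ≤ α) (hβ : 0 ≤ β) (he0 : ∀ k, e 0 k = 0)
    (hrec : ∀ n < N, ∀ k, e (n + 1) (k + 1) ≤ β * e n (k + 1) + α * e n k) {k : ℕ} {M : ℝ}
    (hM : ∀ j, 1 ≤ j → j ≤ N → e j k ≤ M) :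
    ∀ n < N, e (n + 1) (k + 1) ≤ α * (∑ i ∈ range n, β ^ i) * M := by
  intro n
  induction n with
  | zero => intro hN; simpa [he0] using hrec 0 hN k
  | succ n ih =>
    intro hn
    calc e (n + 2) (k + 1) ≤ β * e (n + 1) (k + 1) + α * e (n + 1) k := hrec (n + 1) hn k
      _ ≤ β * (α * (∑ i ∈ range n, β ^ i) * M) + α * M := by
        gcongr
        · exact ih (by omega)
        · exact hM (n + 1) (by omega) (by omega)
      _ = α * (∑ i ∈ range (n + 1), β ^ i) * M := by rw [geom_sum_succ]; ring

theorem parareal_le_choose (hα : 0 ≤ α) (hβ1 : β ≤ 1) (he : ∀ n k, 0 ≤ e n k)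
    (he0 : ∀ k, e 0 k = 0)
    (hrec : ∀ n < N, ∀ k, e (n + 1) (k + 1) ≤ β * e n (k + 1) + α * e n k) {M : ℝ}
    (hM : ∀ j, 1 ≤ j → j ≤ N → e j 0 ≤ M) :
    ∀ n < N, ∀ k, e (n + 1) k ≤ α ^ k * n.choose k * M := by
  intro n
  induction n with
  | zero =>
    rintro hN (_ | k)
    · simpa using hM 1 le_rfl hN
    · simpa [he0] using hrec 0 hN k
  | succ n ih =>
    rintro hn (_ | k)
    · simpa using hM (n + 2) (by omega) (by omega)
    calc e (n + 2) (k + 1) ≤ β * e (n + 1) (k + 1) + α * e (n + 1) k := hrec (n + 1) hn k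
      _ ≤ e (n + 1) (k + 1) + α * e (n + 1) k := by
        gcongr
        exact mul_le_of_le_one_left (he _ _) hβ1
      _ ≤ α ^ (k + 1) * n.choose (k + 1) * M + α * (α ^ k * n.choose k * M) := by
        gcongr
        · exact ih (by omega) (k + 1)
        · exact ih (by omega) k
      _ = α ^ (k + 1) * (n + 1).choose (k + 1) * M := by
        rw [Nat.choose_succ_succ', Nat.cast_add]; ring

theorem parareal_sup_le (hN : 1 ≤ N) (hα : 0 ≤ α) (hβ0 : 0 ≤ β) (hβ1 : β < 1)
    (he : ∀ n k, 0 ≤ e n k) (he0 : ∀ k, e 0 k = 0)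
    (hrec : ∀ n < N, ∀ k, e (n + 1) (k + 1) ≤ β * e n (k + 1) + α * e n k) (k : ℕ) :
    (Icc 1 N).sup' (nonempty_Icc.mpr hN) (fun j => e j (k + 1)) ≤
      α ^ (k + 1) * min (((1 - β ^ (N - 1)) / (1 - β)) ^ (k + 1)) ((N - 1).choose (k + 1) : ℝ) *
        (Icc 1 N).sup' (nonempty_Icc.mpr hN) (fun j => e j 0) := by
  set M : ℕ → ℝ := fun k => (Icc 1 N).sup' (nonempty_Icc.mpr hN) (fun j => e j k)
  have hM : ∀ k j, 1 ≤ j → j ≤ N → e j k ≤ M k := fun k j h1 h2 =>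
    le_sup' (fun j => e j k) (mem_Icc.mpr ⟨h1, h2⟩)
  have hM0 : ∀ k, 0 ≤ M k := fun k => (he 1 k).trans (hM k 1 le_rfl hN)
  have hsup : ∀ k (B : ℝ), (∀ n < N, e (n + 1) k ≤ B) → M k ≤ B := fun k B hB =>
    sup'_le _ _ fun j hj => by
      obtain ⟨h1, h2⟩ := mem_Icc.mp hj
      obtain ⟨n, rfl⟩ : ∃ n, j = n + 1 := ⟨j - 1, by omega⟩
      exact hB n (by omega)
  set G := ∑ i ∈ range (N - 1), β ^ i with hGdef
  have hG : (1 - β ^ (N - 1)) / (1 - β) = G := by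
    rw [hGdef, geom_sum_eq hβ1.ne, ← neg_div_neg_eq, neg_sub, neg_sub]
  have hstep : ∀ k, M (k + 1) ≤ α * G * M k := fun k => hsup _ _ fun n hn => by
    refine (parareal_le_geom_sum hα hβ0 he0 hrec (hM k) n hn).trans ?_
    refine mul_le_mul_of_nonneg_right (mul_le_mul_of_nonneg_left ?_ hα) (hM0 k)
    exact sum_le_sum_of_subset_of_nonneg (range_subset_range.mpr (by omega))
      fun _ _ _ => pow_nonneg hβ0 _
  have hgeom : ∀ k, M k ≤ (α * G) ^ k * M 0 := by
    intro k
    induction k with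
    | zero => simp
    | succ k ih =>
      calc M (k + 1) ≤ α * G * M k := hstep k
        _ ≤ α * G * ((α * G) ^ k * M 0) := by gcongr
        _ = (α * G) ^ (k + 1) * M 0 := by ring
  have hchoose : M (k + 1) ≤ α ^ (k + 1) * (N - 1).choose (k + 1) * M 0 :=
    hsup _ _ fun n hn => by
      refine (parareal_le_choose hα hβ1.le he he0 hrec (hM 0) n hn (k + 1)).trans ?_
      refine mul_le_mul_of_nonneg_right (mul_le_mul_of_nonneg_left ?_ (pow_nonneg hα _)) (hM0 0)
      exact_mod_cast Nat.choose_le_choose _ (by omega)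
  change M (k + 1) ≤ _ * M 0
  rw [hG]
  rcases min_choice (G ^ (k + 1)) ((N - 1).choose (k + 1) : ℝ) with hmin | hmin <;> rw [hmin]
  · rw [← mul_pow]
    exact hgeom (k + 1)
  · exact hchoose

end Parareal

end

theorem stmt12_general (h ΔT ε : ℝ) (hh : 0 < h) (hΔT : 0 < ΔT) (hε : 0 < ε)
    (m : ℕ) (J : ℕ)
    (N : ℕ) (hN : 1 ≤ N)
    (u0 : EuclideanSpace ℝ (Fin m))
    (Uf : ℕ → EuclideanSpace ℝ (Fin m)) (U : ℕ → ℕ → EuclideanSpace ℝ (Fin m))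
    (hUf0 : Uf 0 = u0)
    (hUfrec : ∀ n < N, Uf (n + 1) = act (PJmat m h ΔT ε J 2) (Uf n))
    (h0 : ∀ k, U 0 k = u0)
    (hrec : ∀ n < N, ∀ k, U (n + 1) (k + 1) =
      act (Pmat m h ΔT ε 2) (U n (k + 1))
        + act (PJmat m h ΔT ε J 2 - Pmat m h ΔT ε 2) (U n k)) :
    ∀ k : ℕ,
      ((Finset.Icc 1 N).sup' (Finset.nonempty_Icc.mpr hN)
          fun j => ‖Uf j - U j (k + 1)‖) ≤
        opNorm (PJmat m h ΔT ε J 2 - Pmat m h ΔT ε 2) ^ (k + 1) *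
          min (((1 - opNorm (Pmat m h ΔT ε 2) ^ (N - 1)) /
                  (1 - opNorm (Pmat m h ΔT ε 2))) ^ (k + 1))
              ((N - 1).choose (k + 1) : ℝ) *
          ((Finset.Icc 1 N).sup' (Finset.nonempty_Icc.mpr hN)
            fun j => ‖Uf j - U j 0‖) := by
  set P := Matrix.toEuclideanCLM (𝕜 := ℝ) (Pmat m h ΔT ε 2)
  set Q := Matrix.toEuclideanCLM (𝕜 := ℝ) (PJmat m h ΔT ε J 2 - Pmat m h ΔT ε 2)
  have herr : ∀ n < N, ∀ k, ‖Uf (n + 1) - U (n + 1) (k + 1)‖ ≤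
      ‖P‖ * ‖Uf n - U n (k + 1)‖ + ‖Q‖ * ‖Uf n - U n k‖ := by
    intro n hn k
    have hsplit :
        Uf (n + 1) - U (n + 1) (k + 1) = P (Uf n - U n (k + 1)) + Q (Uf n - U n k) := by
      simp only [hUfrec n hn, hrec n hn k, act, P, Q, map_sub, sub_apply]
      abel
    rw [hsplit]
    exact norm_add_le_of_le (P.le_opNorm _) (Q.le_opNorm _)
  exact parareal_sup_le (e := fun n k => ‖Uf n - U n k‖) hN (norm_nonneg _) (norm_nonneg _)
    (opNorm_Pmat_lt_one hh.ne' hΔT hε.ne' 2) (fun _ _ => norm_nonneg _)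
    (fun k => by rw [hUf0, h0, sub_self, norm_zero]) herr

theorem stmt12 (h ΔT ε : ℝ) (hh : 0 < h) (hΔT : 0 < ΔT) (hε : 0 < ε)
    (m : ℕ) (hm : 1 ≤ m) (J : ℕ) (hJ : 2 ≤ J)
    (N : ℕ) (hN : 1 ≤ N)
    (u0 : EuclideanSpace ℝ (Fin m))
    (Uf : ℕ → EuclideanSpace ℝ (Fin m)) (U : ℕ → ℕ → EuclideanSpace ℝ (Fin m))
    (hUf0 : Uf 0 = u0)
    (hUfrec : ∀ n < N, Uf (n + 1) = act (PJmat m h ΔT ε J 2) (Uf n))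
    (h0 : ∀ k, U 0 k = u0)
    (hrec : ∀ n < N, ∀ k, U (n + 1) (k + 1) =
      act (Pmat m h ΔT ε 2) (U n (k + 1))
        + act (PJmat m h ΔT ε J 2 - Pmat m h ΔT ε 2) (U n k)) :
    ∀ k : ℕ,
      ((Finset.Icc 1 N).sup' (Finset.nonempty_Icc.mpr hN)
          fun j => ‖Uf j - U j (k + 1)‖) ≤
        opNorm (PJmat m h ΔT ε J 2 - Pmat m h ΔT ε 2) ^ (k + 1) *
          min (((1 - opNorm (Pmat m h ΔT ε 2) ^ (N - 1)) /
                  (1 - opNorm (Pmat m h ΔT ε 2))) ^ (k + 1))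
              ((N - 1).choose (k + 1) : ℝ) *
          ((Finset.Icc 1 N).sup' (Finset.nonempty_Icc.mpr hN)
            fun j => ‖Uf j - U j 0‖) :=
  stmt12_general h ΔT ε hh hΔT hε m J N hN u0 Uf U hUf0 hUfrec h0 hrec
end
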